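/- There exists a constant C > 0 such that the following holds. Let p be an odd prime, let k ≥ 1 be an integer, let G be the set of monic polynomials in F_p[X] of degree 1 or 2, let U_G be uniformly distributed on G, let A = P_k(U_G) ∈ {0,1}^k, and let U_k be uniformly distributed on {0,1}^k. Then the statistical distance satisfies SD(A, U_k) ≤ C · √(2^k/p) · (1 + √(log₂ p)/(p + 1)). -/

import Mathlib

/-!
Sending `(c, none)` to `X - c` and `(c, some b)` to `X² + bX + c` is a bijection
`F_p × Option F_p ≃ G` along which `P_k` becomes `lsb_k ∘ Prod.fst`, so `P_k(U_G)` has the law of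
`lsb_k` of a uniform element of `F_p`. Each residue class modulo `2^k` has `⌊p/2^k⌋` or
`⌊p/2^k⌋ + 1` representatives in `[0, p)`, so every atom of that law is within `1/p` of `2^{-k}`
and the statistical distance is at most `2^k/(2p)`; being also at most `1`, it is at most
`√(2^k/p)`. Hence `C = 1` works.
-/

open Polynomial Finset

namespace Polynomial

def monicDegOneOrTwo (R : Type*) [Semiring R] : Set R[X] :=
  {u | u.Monic ∧ (u.degree = 1 ∨ u.degree = 2)}

variable {R : Type*} [Ring R]

noncomputable def linearOrQuadratic : R × Option R → R[X]
  | (c, none) => X - C c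
  | (c, some b) => X ^ 2 + C b * X + C c

@[simp]
lemma linearOrQuadratic_none (c : R) : linearOrQuadratic (c, none) = X - C c := rfl

@[simp]
lemma linearOrQuadratic_some (c b : R) :
    linearOrQuadratic (c, some b) = X ^ 2 + C b * X + C c := rfl

variable [Nontrivial R]

lemma natDegree_X_sq_add_C_mul_X_add_C (b c : R) : (X ^ 2 + C b * X + C c).natDegree = 2 := by
  simpa using natDegree_quadratic (R := R) (a := 1) (b := b) (c := c) one_ne_zero

lemma linearOrQuadratic_injective : Function.Injective (linearOrQuadratic (R := R)) := by
  rintro ⟨c, _ | b⟩ ⟨c', _ | b'⟩ h <;>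
    simp only [linearOrQuadratic_none, linearOrQuadratic_some] at h
  case none.none => simpa using congrArg (coeff · 0) h
  case some.some =>
    have hc : c = c' := by simpa using congrArg (coeff · 0) h
    have hb : b = b' := by simpa using congrArg (coeff · 1) h
    rw [hc, hb]
  all_goals
    have hdeg := congrArg natDegree h
    rw [natDegree_X_sub_C, natDegree_X_sq_add_C_mul_X_add_C] at hdeg
    omega

lemma range_linearOrQuadratic : Set.range (linearOrQuadratic (R := R)) = monicDegOneOrTwo R := by
  ext u
  constructor
  · rintro ⟨⟨c, _ | b⟩, rfl⟩
    · exact ⟨monic_X_sub_C c, .inl (degree_X_sub_C c)⟩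
    · refine ⟨?_, .inr ?_⟩
      · simpa [Monic.def] using leadingCoeff_quadratic (R := R) (b := b) (c := c) one_ne_zero
      · simpa using degree_quadratic (R := R) (b := b) (c := c) one_ne_zero
  · rintro ⟨hu, h | h⟩
    · refine ⟨(-u.coeff 0, none), ?_⟩
      rw [linearOrQuadratic_none, C_neg, sub_neg_eq_add]
      exact (hu.eq_X_add_C (natDegree_eq_of_degree_eq_some h)).symm
    · refine ⟨(u.coeff 0, some (u.coeff 1)), ?_⟩
      conv_rhs => rw [hu.as_sum, natDegree_eq_of_degree_eq_some h]
      simp only [linearOrQuadratic_some, Finset.sum_range_succ, Finset.sum_range_zero, pow_zero,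
        pow_one, mul_one]
      abel

def extractor {β : Type*} (f : R → β) (d : β) (u : R[X]) : β :=
  if u.natDegree = 2 then f (u.coeff 0) else if u.natDegree = 1 then f (-u.coeff 0) else d

lemma extractor_linearOrQuadratic {β : Type*} (f : R → β) (d : β) (x : R × Option R) :
    extractor f d (linearOrQuadratic x) = f x.1 := by
  obtain ⟨c, _ | b⟩ := x
  · simp [extractor]
  · simp only [extractor, linearOrQuadratic_some, natDegree_X_sq_add_C_mul_X_add_C]
    simp

variable [Finite R]

lemma card_monicDegOneOrTwo : Nat.card (monicDegOneOrTwo R) = Nat.card R * (Nat.card R + 1) := by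
  rw [← range_linearOrQuadratic, Nat.card_range_of_injective linearOrQuadratic_injective,
    Nat.card_prod, Finite.card_option]

lemma card_monicDegOneOrTwo_extractor_eq {β : Type*} (f : R → β) (d a : β) :
    Nat.card {u // u ∈ monicDegOneOrTwo R ∧ extractor f d u = a} =
      Nat.card {c // f c = a} * (Nat.card R + 1) := by
  have fiber : {u | u ∈ monicDegOneOrTwo R ∧ extractor f d u = a} =
      linearOrQuadratic '' {x | f x.1 = a} := by
    rw [← range_linearOrQuadratic]
    ext u
    constructor
    · rintro ⟨⟨x, rfl⟩, hx⟩
      exact ⟨x, (extractor_linearOrQuadratic f d x).symm.trans hx, rfl⟩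
    · rintro ⟨x, hx, rfl⟩
      exact ⟨⟨x, rfl⟩, (extractor_linearOrQuadratic f d x).trans hx⟩
  rw [← Set.coe_ofPred, fiber, Nat.card_image_of_injective linearOrQuadratic_injective,
    Set.coe_ofPred, Nat.card_congr (Equiv.prodSubtypeFstEquivSubtypeProd (p := (f · = a))),
    Nat.card_prod, Finite.card_option]

lemma card_monicDegOneOrTwo_extractor_eq_div_card {β : Type*} (f : R → β) (d a : β) :
    (Nat.card {u // u ∈ monicDegOneOrTwo R ∧ extractor f d u = a} : ℝ) /
        Nat.card (monicDegOneOrTwo R) = Nat.card {c // f c = a} / Nat.card R := by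
  rw [card_monicDegOneOrTwo_extractor_eq, card_monicDegOneOrTwo]
  push_cast
  exact mul_div_mul_right _ _ (by positivity)

end Polynomial

namespace Nat

def lowBits (k x : ℕ) : Fin k → Bool := fun i => x.testBit i

lemma lowBits_eq_iff_modEq {k x y : ℕ} : lowBits k x = lowBits k y ↔ x ≡ y [MOD 2 ^ k] := by
  constructor
  · intro h
    refine eq_of_testBit_eq fun i => ?_
    rw [testBit_mod_two_pow, testBit_mod_two_pow]
    by_cases hi : i < k
    · simp only [hi, decide_true, Bool.true_and]
      exact congrFun h ⟨i, hi⟩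
    · simp [hi]
  · intro h
    funext i
    show x.testBit i = y.testBit i
    simpa [testBit_mod_two_pow] using congrArg (testBit · i) h

lemma lowBits_surjective (k : ℕ) : Function.Surjective (lowBits k) := by
  have hinj : Function.Injective fun r : Fin (2 ^ k) => lowBits k r := fun r s h =>
    Fin.ext (ModEq.eq_of_lt_of_lt (lowBits_eq_iff_modEq.mp h) r.2 s.2)
  intro a
  obtain ⟨r, hr⟩ := ((Fintype.bijective_iff_injective_and_card _).mpr ⟨hinj, by simp⟩).2 a
  exact ⟨r, hr⟩

lemma count_lowBits_eq_mem_Icc (p k : ℕ) (a : Fin k → Bool) :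
    count (lowBits k · = a) p ∈ Set.Icc (p / 2 ^ k) (p / 2 ^ k + 1) := by
  obtain ⟨r, rfl⟩ := lowBits_surjective k a
  simp_rw [lowBits_eq_iff_modEq]
  rw [count_modEq_card p (Nat.two_pow_pos k)]
  split_ifs <;> simp

lemma abs_count_lowBits_sub_le (p k : ℕ) (a : Fin k → Bool) :
    |(count (lowBits k · = a) p : ℝ) - p / 2 ^ k| ≤ 1 := by
  obtain ⟨hlow, hup⟩ := count_lowBits_eq_mem_Icc p k a
  have hfloor : ⌊(p : ℝ) / 2 ^ k⌋₊ = p / 2 ^ k := by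
    exact_mod_cast floor_div_eq_div (K := ℝ) p (2 ^ k)
  have hfloor_le := floor_le (a := (p : ℝ) / 2 ^ k) (by positivity)
  have hlt_floor_add_one := lt_floor_add_one ((p : ℝ) / 2 ^ k)
  rw [hfloor] at hfloor_le hlt_floor_add_one
  have hlow' : ((p / 2 ^ k : ℕ) : ℝ) ≤ count (lowBits k · = a) p := by exact_mod_cast hlow
  have hup' : (count (lowBits k · = a) p : ℝ) ≤ (p / 2 ^ k : ℕ) + 1 := by exact_mod_cast hup
  rw [abs_le]
  constructor <;> linarith

lemma abs_count_lowBits_div_sub_le {p : ℕ} (hp : 0 < p) (k : ℕ) (a : Fin k → Bool) :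
    |(count (lowBits k · = a) p : ℝ) / p - 1 / 2 ^ k| ≤ 1 / p := by
  have hp' : (0 : ℝ) < p := by exact_mod_cast hp
  rw [show (count (lowBits k · = a) p : ℝ) / p - 1 / 2 ^ k =
      (count (lowBits k · = a) p - p / 2 ^ k) / p by field_simp, abs_div, abs_of_pos hp']
  gcongr
  exact abs_count_lowBits_sub_le p k a

end Nat

lemma ZMod.card_subtype_val_eq_count (p : ℕ) [NeZero p] (q : ℕ → Prop) [DecidablePred q] :
    Nat.card {c : ZMod p // q c.val} = Nat.count q p := by
  rw [Nat.count_eq_card_fintype, Fintype.card_eq_nat_card]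
  exact Nat.card_congr
    { toFun c := ⟨c.1.val, c.1.val_lt, c.2⟩
      invFun n := ⟨n.1, by rw [ZMod.val_cast_of_lt n.2.1]; exact n.2.2⟩
      left_inv c := Subtype.ext (ZMod.natCast_zmod_val c.1)
      right_inv n := Subtype.ext (ZMod.val_cast_of_lt n.2.1) }

lemma sum_card_fiber_div_card {α β : Type*} [Fintype β] [Finite α] [Nonempty α] (g : α → β) :
    ∑ b, (Nat.card {a // g a = b} : ℝ) / Nat.card α = 1 := by
  rw [← sum_div, ← Nat.cast_sum, ← Nat.card_sigma, Nat.card_congr (Equiv.sigmaFiberEquiv g),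
    div_self (Nat.cast_ne_zero.mpr Nat.card_pos.ne')]

lemma sum_abs_sub_le_two {ι : Type*} [Fintype ι] {μ ν : ι → ℝ} (hμ : ∀ i, 0 ≤ μ i)
    (hν : ∀ i, 0 ≤ ν i) (hμ₁ : ∑ i, μ i = 1) (hν₁ : ∑ i, ν i = 1) :
    ∑ i, |μ i - ν i| ≤ 2 :=
  calc ∑ i, |μ i - ν i| ≤ ∑ i, (μ i + ν i) := by
        gcongr with i
        exact (abs_sub _ _).trans (by rw [abs_of_nonneg (hμ i), abs_of_nonneg (hν i)])
    _ = 2 := by rw [sum_add_distrib, hμ₁, hν₁]; norm_num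

lemma le_sqrt_of_le_of_le_one {s x : ℝ} (hx : 0 ≤ x) (h₁ : s ≤ x) (h₂ : s ≤ 1) :
    s ≤ √x := by
  rcases le_total x 1 with h | h
  · exact h₁.trans (Real.le_sqrt_of_sq_le (by nlinarith))
  · exact h₂.trans (Real.one_le_sqrt.mpr h)

lemma half_sum_abs_sub_uniform_le_sqrt {ι : Type*} [Fintype ι] {μ : ι → ℝ} (hμ : ∀ i, 0 ≤ μ i)
    (hμ₁ : ∑ i, μ i = 1) {ε : ℝ} (hε : ∀ i, |μ i - 1 / Fintype.card ι| ≤ ε) :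
    1 / 2 * ∑ i, |μ i - 1 / Fintype.card ι| ≤ √(Fintype.card ι * ε) := by
  have : Nonempty ι := by
    by_contra h
    rw [not_nonempty_iff] at h
    simp at hμ₁
  have hsum_uniform : ∑ _i : ι, 1 / (Fintype.card ι : ℝ) = 1 := by simp
  have hle_two := sum_abs_sub_le_two hμ (fun _ => by positivity) hμ₁ hsum_uniform
  have hle : ∑ i, |μ i - 1 / Fintype.card ι| ≤ Fintype.card ι * ε := by
    simpa using sum_le_sum fun i (_ : i ∈ univ) => hε i
  have hnonneg : 0 ≤ ∑ i, |μ i - 1 / Fintype.card ι| := by positivity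
  exact le_sqrt_of_le_of_le_one (hnonneg.trans hle) (by linarith) (by linarith)

/-- STATEMENT 6: there is a constant `C > 0` such that for every odd prime `p` and every
`k ≥ 1`, with `G` the set of monic polynomials of degree `1` or `2` over `F_p`, `U_G`
uniform on `G` and `A = P_k(U_G) ∈ {0,1}^k`, the statistical distance between `A` and the
uniform distribution on `{0,1}^k` is at most `C·√(2^k/p)·(1 + √(log₂ p)/(p+1))`. -/
theorem Pk_extractor_statDist :
    ∃ C : ℝ, 0 < C ∧
      ∀ (p k : ℕ) (hp : p.Prime) (hodd : Odd p) (hk : 1 ≤ k),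
        -- monic polynomials of degree 1 or 2 over `F_p`
        let G : Set (Polynomial (ZMod p)) := {u | u.Monic ∧ (u.degree = 1 ∨ u.degree = 2)}
        -- the `k` least significant bits of (the integer representative of) `x ∈ F_p`
        let lsb : ZMod p → (Fin k → Bool) := fun x i => (x.val).testBit (i : ℕ)
        -- the extractor `P_k`
        let P : Polynomial (ZMod p) → (Fin k → Bool) := fun u =>
          if u.natDegree = 2 then lsb (u.coeff 0)
          else if u.natDegree = 1 then lsb (-(u.coeff 0))
          else fun _ => false
        (1 / 2 : ℝ) * ∑ a : Fin k → Bool,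
            |(Nat.card {u : Polynomial (ZMod p) // u ∈ G ∧ P u = a} : ℝ)
                / (Nat.card G : ℝ) - 1 / ((2 : ℝ) ^ k)|
          ≤ C * Real.sqrt ((2 : ℝ) ^ k / (p : ℝ)) *
              (1 + Real.sqrt (Real.logb 2 (p : ℝ)) / ((p : ℝ) + 1)) := by
  refine ⟨1, one_pos, ?_⟩
  intro p k hp _ _ G lsb P
  have : Fact (1 < p) := ⟨hp.one_lt⟩
  set μ : (Fin k → Bool) → ℝ := fun a => Nat.card {c // lsb c = a} / p
  have hdistrib (a : Fin k → Bool) :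
      (Nat.card {u // u ∈ G ∧ P u = a} : ℝ) / Nat.card G = μ a := by
    have h := card_monicDegOneOrTwo_extractor_eq_div_card lsb (fun _ => false) a
    rwa [Nat.card_zmod] at h
  have hcard : (Fintype.card (Fin k → Bool) : ℝ) = 2 ^ k := by simp
  have hclose (a : Fin k → Bool) : |μ a - 1 / Fintype.card (Fin k → Bool)| ≤ 1 / p := by
    have h := Nat.abs_count_lowBits_div_sub_le hp.pos k a
    rwa [← ZMod.card_subtype_val_eq_count, ← hcard] at h
  have hsum : ∑ a, μ a = 1 := by
    have h := sum_card_fiber_div_card lsb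
    rwa [Nat.card_zmod] at h
  have hSD := half_sum_abs_sub_uniform_le_sqrt (fun a => by positivity) hsum hclose
  rw [hcard, mul_one_div] at hSD
  simp only [hdistrib]
  calc _ ≤ √(2 ^ k / p) := hSD
    _ ≤ 1 * √(2 ^ k / p) * (1 + √(Real.logb 2 p) / (p + 1)) := by
      rw [one_mul]
      exact le_mul_of_one_le_right (Real.sqrt_nonneg _) (le_add_of_nonneg_right (by positivity))
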